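/- arXiv:math-ph/0304026 — 2 statements merged into one kernel-verified Lean document; each statement's English description precedes it below -/
import Mathlib

section
/- Let Q be the quadratic form Q(v) = −‖v‖² on Euclidean space ℝⁿ, and let (e₁, …, eₙ) and (f₁, …, fₙ) be two orthonormal bases of ℝⁿ whose change-of-basis matrix has determinant 1 (equivalently, which determine the same orientation). Then ι(e₁)·ι(e₂)·…·ι(eₙ) = ι(f₁)·ι(f₂)·…·ι(fₙ) in the Clifford algebra of Q; that is, the volume element of the Clifford algebra does not depend on the choice of positively oriented orthonormal basis. -/
open scoped RealInnerProductSpace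

/-!
Since `Q` is polar-orthogonal on an orthonormal family, the isomorphism
`CliffordAlgebra.equivExterior Q` (a change of form by `associated (-Q)`) sends the Clifford
product of the family to its wedge product. In the exterior algebra, `ιMulti` is alternating of
top degree, so the wedge product of `f` is `det M` times that of `e`.
-/

namespace CliffordAlgebra

variable {R M : Type*} [CommRing R] [AddCommGroup M] [Module R M]

theorem contractLeft_prod_ofFn_ι_eq_zero {Q : QuadraticForm R M} (d : Module.Dual R M) :
    ∀ {k : ℕ} (v : Fin k → M), (∀ i, d (v i) = 0) →
      contractLeft (Q := Q) d (List.ofFn fun i => ι Q (v i)).prod = 0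
  | 0, _, _ => by simp
  | k + 1, v, hv => by
    rw [List.ofFn_succ, List.prod_cons, contractLeft_ι_mul, hv 0, zero_smul,
      contractLeft_prod_ofFn_ι_eq_zero d (fun i => v i.succ) (fun i => hv i.succ), mul_zero,
      sub_zero]

/-- For pairwise `B`-orthogonal vectors the correction terms of `changeForm_ι_mul` all vanish. -/
theorem changeForm_prod_ofFn_ι {Q Q' : QuadraticForm R M} {B : LinearMap.BilinForm R M}
    (h : B.toQuadraticMap = Q' - Q) :
    ∀ {k : ℕ} (v : Fin k → M), Pairwise (fun i j => B (v i) (v j) = 0) →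
      changeForm h (List.ofFn fun i => ι Q (v i)).prod = (List.ofFn fun i => ι Q' (v i)).prod
  | 0, _, _ => by simp
  | k + 1, v, hv => by
    rw [List.ofFn_succ, List.prod_cons, changeForm_ι_mul,
      changeForm_prod_ofFn_ι h (fun i => v i.succ)
        (fun i j hij => hv (Fin.succ_injective k |>.ne hij)),
      contractLeft_prod_ofFn_ι_eq_zero (B (v 0)) (fun i => v i.succ)
        (fun i => hv (Fin.succ_ne_zero i).symm),
      sub_zero, List.ofFn_succ, List.prod_cons]

theorem equivExterior_prod_ofFn_ι [Invertible (2 : R)] {Q : QuadraticForm R M} {k : ℕ}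
    (v : Fin k → M) (hv : Pairwise fun i j => QuadraticMap.polar Q (v i) (v j) = 0) :
    equivExterior Q (List.ofFn fun i => ι Q (v i)).prod = ExteriorAlgebra.ιMulti R k v := by
  refine changeForm_prod_ofFn_ι changeForm.associated_neg_proof v fun i j hij => ?_
  show ⅟(2 : Module.End R R) • QuadraticMap.polar (-Q) (v i) (v j) = 0
  rw [FunLike.coe_neg, QuadraticMap.polar_neg, hv hij, neg_zero, smul_zero]

end CliffordAlgebra

theorem AlternatingMap.map_eq_basis_det_smul {ι R M N : Type*} [Fintype ι] [DecidableEq ι]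
    [CommRing R] [AddCommGroup M] [Module R M] [AddCommGroup N] [Module R N]
    (e : Module.Basis ι R M) (g : M [⋀^ι]→ₗ[R] N) (v : ι → M) : g v = e.det v • g e := by
  suffices g = (LinearMap.toSpanSingleton R N (g e)).compAlternatingMap e.det by
    conv_lhs => rw [this]
    rfl
  refine e.ext_alternating fun i hi => ?_
  let σ : Equiv.Perm ι := Equiv.ofBijective i (Finite.injective_iff_bijective.1 hi)
  change g (e ∘ σ) = e.det (e ∘ σ) • g e
  rw [AlternatingMap.map_perm, AlternatingMap.map_perm, Module.Basis.det_self]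
  rcases Int.units_eq_one_or (Equiv.Perm.sign σ) with hσ | hσ <;> simp [hσ]

theorem Module.Basis.det_eq_of_eq_sum_smul {ι R M : Type*} [Fintype ι] [DecidableEq ι]
    [CommRing R] [AddCommGroup M] [Module R M] (e : Module.Basis ι R M) {v : ι → M}
    {A : Matrix ι ι R} (hv : ∀ j, v j = ∑ i, A i j • e i) : e.det v = A.det := by
  rw [Module.Basis.det_apply]
  congr
  ext i j
  rw [Module.Basis.toMatrix_apply, hv, e.repr_sum_self]

theorem QuadraticMap.polar_eq_neg_two_mul_inner {E : Type*} [NormedAddCommGroup E]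
    [InnerProductSpace ℝ E] {Q : QuadraticForm ℝ E} (hQ : ∀ v, Q v = -‖v‖ ^ 2) (x y : E) :
    QuadraticMap.polar Q x y = -(2 * ⟪x, y⟫) := by
  rw [QuadraticMap.polar, hQ, hQ, hQ, norm_add_sq_real]
  ring

/-- Let `Q` be the quadratic form `Q(v) = -‖v‖²` on Euclidean `ℝⁿ` and let
`(e₁, …, eₙ)`, `(f₁, …, fₙ)` be orthonormal bases whose change-of-basis matrix has
determinant `1` (i.e. they determine the same orientation). Then
`ι(e₁)·…·ι(eₙ) = ι(f₁)·…·ι(fₙ)` in the Clifford algebra of `Q`: the volume element does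
not depend on the choice of positively oriented orthonormal basis. -/
theorem volume_element_independent_of_oriented_onb (n : ℕ)
    (Q : QuadraticForm ℝ (EuclideanSpace ℝ (Fin n)))
    (hQ : ∀ v, Q v = -‖v‖ ^ 2)
    (e f : Fin n → EuclideanSpace ℝ (Fin n))
    (he : Orthonormal ℝ e) (hf : Orthonormal ℝ f)
    (M : Matrix (Fin n) (Fin n) ℝ)
    (hM : ∀ j, f j = ∑ i, M i j • e i)
    (hdet : M.det = 1) :
    (List.ofFn fun i : Fin n => CliffordAlgebra.ι Q (e i)).prod =
      (List.ofFn fun i : Fin n => CliffordAlgebra.ι Q (f i)).prod := by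
  have polar_eq_zero {v : Fin n → EuclideanSpace ℝ (Fin n)} (hv : Orthonormal ℝ v) :
      Pairwise fun i j => QuadraticMap.polar Q (v i) (v j) = 0 := fun i j hij => by
    beta_reduce
    rw [QuadraticMap.polar_eq_neg_two_mul_inner hQ, hv.inner_eq_zero hij, mul_zero, neg_zero]
  let b := basisOfLinearIndependentOfCardEqFinrank' e he.linearIndependent (by simp)
  have hb : ⇑b = e := coe_basisOfLinearIndependentOfCardEqFinrank' _ _ _
  apply (CliffordAlgebra.equivExterior Q).injective
  rw [CliffordAlgebra.equivExterior_prod_ofFn_ι e (polar_eq_zero he),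
    CliffordAlgebra.equivExterior_prod_ofFn_ι f (polar_eq_zero hf),
    (ExteriorAlgebra.ιMulti ℝ n).map_eq_basis_det_smul b f,
    b.det_eq_of_eq_sum_smul (hb ▸ hM), hdet, one_smul, hb]
end

section
/- Fix a real constant c and define, for nonzero x ∈ ℝ⁴ and v ∈ ℝ⁴, the gauge-transformed instanton potential A₂(x)v := (c²/(‖x‖² + c²))·γ(x)·(D(γ⁻¹))(x)v ∈ M₂(ℂ). Then there exists a constant C > 0 such that for all x ∈ ℝ⁴ with ‖x‖ ≥ 1 and all v ∈ ℝ⁴, ‖A₂(x)v‖ ≤ C·‖x‖⁻³·‖v‖; that is, A₂ vanishes as O(r⁻³) at infinity. -/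
open Matrix

attribute [local instance] Matrix.linftyOpNormedAddCommGroup Matrix.linftyOpNormedRing
  Matrix.linftyOpNormedAlgebra

/-- The Pauli matrix σ₁. -/
def pauli1 : Matrix (Fin 2) (Fin 2) ℂ := !![0, 1; 1, 0]

/-- The Pauli matrix σ₂. -/
def pauli2 : Matrix (Fin 2) (Fin 2) ℂ := !![0, -Complex.I; Complex.I, 0]

/-- The Pauli matrix σ₃. -/
def pauli3 : Matrix (Fin 2) (Fin 2) ℂ := !![1, 0; 0, -1]

/-- The map `γ(x) = ‖x‖⁻¹ (x₄ I₂ - i(x₁σ₁ + x₂σ₂ + x₃σ₃))` on `ℝ⁴`. -/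
noncomputable def gammaMap (x : EuclideanSpace ℝ (Fin 4)) : Matrix (Fin 2) (Fin 2) ℂ :=
  ((‖x‖⁻¹ : ℝ) : ℂ) •
    ((x 3 : ℂ) • (1 : Matrix (Fin 2) (Fin 2) ℂ) -
      Complex.I • ((x 0 : ℂ) • pauli1 + (x 1 : ℂ) • pauli2 + (x 2 : ℂ) • pauli3))

/-- The gauge-transformed instanton potential
`A₂(x)v = (c²/(‖x‖² + c²)) · γ(x) · (D(γ⁻¹))(x)v`. -/
noncomputable def instantonPotentialA2 (c : ℝ) (x v : EuclideanSpace ℝ (Fin 4)) :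
    Matrix (Fin 2) (Fin 2) ℂ :=
  (c ^ 2 / (‖x‖ ^ 2 + c ^ 2)) •
    (gammaMap x * fderiv ℝ (fun y => (gammaMap y)⁻¹) x v)

/-! Writing `L(x) = x₄ I₂ - i(x₁σ₁ + x₂σ₂ + x₃σ₃)` and `L̄(x) = x₄ I₂ + i(x₁σ₁ + x₂σ₂ + x₃σ₃)`
(quaternion conjugation), the Pauli relations give `L(x) L̄(x) = ‖x‖² I₂`, so
`γ(x) = ‖x‖⁻¹ L(x)` and `γ(x)⁻¹ = ‖x‖⁻¹ L̄(x)`. Both are bounded and homogeneous of degree `0`,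
so `D(γ⁻¹)(x)` is `O(‖x‖⁻¹)`; the prefactor `c²/(‖x‖² + c²)` contributes another `‖x‖⁻²`. -/

section NormInvSmul

variable {E F : Type*} [NormedAddCommGroup E] [InnerProductSpace ℝ E]
  [NormedAddCommGroup F] [NormedSpace ℝ F]

theorem norm_norm_inv_smul_apply_le (T : E →L[ℝ] F) (x : E) : ‖‖x‖⁻¹ • T x‖ ≤ ‖T‖ := by
  rw [norm_smul, norm_inv, norm_norm]
  exact inv_mul_le_of_le_mul₀ (norm_nonneg x) (norm_nonneg T)
    ((T.le_opNorm x).trans_eq (mul_comm _ _))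

theorem hasFDerivAt_norm_inv {x : E} (hx : x ≠ 0) :
    HasFDerivAt (fun y : E => ‖y‖⁻¹) (-(‖x‖ ^ 2)⁻¹ • fderiv ℝ norm x) x :=
  (hasDerivAt_inv (norm_ne_zero_iff.2 hx)).comp_hasFDerivAt x
    ((contDiffAt_norm ℝ hx).differentiableAt one_ne_zero).hasFDerivAt

theorem hasFDerivAt_norm_inv_smul (T : E →L[ℝ] F) {x : E} (hx : x ≠ 0) :
    HasFDerivAt (fun y => ‖y‖⁻¹ • T y)
      (‖x‖⁻¹ • T + (-(‖x‖ ^ 2)⁻¹ • fderiv ℝ norm x).smulRight (T x)) x :=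
  (hasFDerivAt_norm_inv hx).smul T.hasFDerivAt

theorem norm_fderiv_norm_inv_smul_apply_le (T : E →L[ℝ] F) {x : E} (hx : x ≠ 0) (v : E) :
    ‖fderiv ℝ (fun y => ‖y‖⁻¹ • T y) x v‖ ≤ 2 * ‖T‖ * ‖x‖⁻¹ * ‖v‖ := by
  have hDnorm : ‖fderiv ℝ norm x v‖ ≤ ‖v‖ :=
    ((fderiv ℝ norm x).le_opNorm v).trans <| mul_le_of_le_one_left (norm_nonneg v) <| by
      simpa using norm_fderiv_le_of_lipschitz ℝ (x₀ := x) lipschitzWith_one_norm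
  rw [(hasFDerivAt_norm_inv_smul T hx).fderiv]
  calc ‖‖x‖⁻¹ • T v + (-(‖x‖ ^ 2)⁻¹ * fderiv ℝ norm x v) • T x‖
      ≤ ‖x‖⁻¹ * (‖T‖ * ‖v‖) + (‖x‖ ^ 2)⁻¹ * ‖v‖ * (‖T‖ * ‖x‖) := by
        refine (norm_add_le _ _).trans (add_le_add ?_ ?_) <;> rw [norm_smul] <;> gcongr
        · simp
        · exact T.le_opNorm v
        · rw [norm_mul, norm_neg, norm_inv, norm_pow, norm_norm]
          gcongr
        · exact T.le_opNorm x
    _ = 2 * ‖T‖ * ‖x‖⁻¹ * ‖v‖ := by field_simp; ring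

end NormInvSmul

local notation "ℝ⁴" => EuclideanSpace ℝ (Fin 4)

-- Instance search does not reach this through the local `linftyOp` norm instances on matrices.
noncomputable local instance : NormedAddCommGroup (ℝ⁴ →L[ℝ] Matrix (Fin 2) (Fin 2) ℂ) :=
  ContinuousLinearMap.toNormedAddCommGroup

noncomputable def gammaLin : ℝ⁴ →L[ℝ] Matrix (Fin 2) (Fin 2) ℂ :=
  (EuclideanSpace.proj 3).smulRight 1 - (EuclideanSpace.proj 0).smulRight (Complex.I • pauli1)
    - (EuclideanSpace.proj 1).smulRight (Complex.I • pauli2)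
    - (EuclideanSpace.proj 2).smulRight (Complex.I • pauli3)

noncomputable def gammaLinConj : ℝ⁴ →L[ℝ] Matrix (Fin 2) (Fin 2) ℂ :=
  (EuclideanSpace.proj 3).smulRight 1 + (EuclideanSpace.proj 0).smulRight (Complex.I • pauli1)
    + (EuclideanSpace.proj 1).smulRight (Complex.I • pauli2)
    + (EuclideanSpace.proj 2).smulRight (Complex.I • pauli3)

theorem gammaMap_eq_smul_gammaLin (x : ℝ⁴) : gammaMap x = ‖x‖⁻¹ • gammaLin x := by
  simp only [gammaMap, gammaLin, _root_.sub_apply, ContinuousLinearMap.smulRight_apply,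
    PiLp.proj_apply, ← Complex.coe_smul]
  module

theorem gammaLin_mul_gammaLinConj (x : ℝ⁴) :
    gammaLin x * gammaLinConj x = ((‖x‖ ^ 2 : ℝ) : ℂ) • 1 := by
  simp only [gammaLin, gammaLinConj, _root_.sub_apply, _root_.add_apply,
    ContinuousLinearMap.smulRight_apply, PiLp.proj_apply, EuclideanSpace.real_norm_sq_eq,
    Fin.sum_univ_four]
  ext i j
  fin_cases i <;> fin_cases j <;>
    simp [pauli1, pauli2, pauli3, Matrix.mul_apply, Matrix.one_apply, Complex.ext_iff, sq] <;>
    constructor <;> ring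

theorem gammaMap_inv_eq_smul_gammaLinConj (x : ℝ⁴) :
    (gammaMap x)⁻¹ = ‖x‖⁻¹ • gammaLinConj x := by
  rcases eq_or_ne x 0 with rfl | hx
  · simp [gammaMap_eq_smul_gammaLin]
  refine Matrix.inv_eq_right_inv ?_
  rw [gammaMap_eq_smul_gammaLin, smul_mul_smul_comm, gammaLin_mul_gammaLinConj, Complex.coe_smul,
    smul_smul, ← sq, inv_pow, inv_mul_cancel₀ (by positivity), one_smul]

theorem norm_instantonPotentialA2_le (c : ℝ) {x : ℝ⁴} (hx : x ≠ 0) (v : ℝ⁴) :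
    ‖instantonPotentialA2 c x v‖ ≤ 2 * c ^ 2 * ‖gammaLin‖ * ‖gammaLinConj‖ * ‖x‖⁻¹ ^ 3 * ‖v‖ := by
  have hγ : ‖gammaMap x‖ ≤ ‖gammaLin‖ :=
    gammaMap_eq_smul_gammaLin x ▸ norm_norm_inv_smul_apply_le gammaLin x
  have hDγinv : ‖fderiv ℝ (fun y => (gammaMap y)⁻¹) x v‖
      ≤ 2 * ‖gammaLinConj‖ * ‖x‖⁻¹ * ‖v‖ := by
    rw [funext gammaMap_inv_eq_smul_gammaLinConj]
    exact norm_fderiv_norm_inv_smul_apply_le gammaLinConj hx v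
  have hfactor : c ^ 2 / (‖x‖ ^ 2 + c ^ 2) ≤ c ^ 2 * ‖x‖⁻¹ ^ 2 := by
    rw [inv_pow, ← div_eq_mul_inv]
    exact div_le_div_of_nonneg_left (sq_nonneg c) (by positivity)
      (le_add_of_nonneg_right (sq_nonneg c))
  rw [instantonPotentialA2, norm_smul, Real.norm_of_nonneg (by positivity)]
  calc _ ≤ c ^ 2 * ‖x‖⁻¹ ^ 2 * (‖gammaLin‖ * (2 * ‖gammaLinConj‖ * ‖x‖⁻¹ * ‖v‖)) := by
        gcongr
        exact (norm_mul_le _ _).trans (by gcongr)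
    _ = _ := by ring

/-- The gauge-transformed instanton potential
`A₂(x)v = (c²/(‖x‖² + c²))·γ(x)·(D(γ⁻¹))(x)v` vanishes as `O(r⁻³)` at infinity: there is
`C > 0` with `‖A₂(x)v‖ ≤ C·‖x‖⁻³·‖v‖` for all `‖x‖ ≥ 1` and all `v`. -/
theorem instantonPotentialA2_decay (c : ℝ) :
    ∃ C > 0, ∀ (x v : EuclideanSpace ℝ (Fin 4)), 1 ≤ ‖x‖ →
      ‖instantonPotentialA2 c x v‖ ≤ C * ‖x‖⁻¹ ^ 3 * ‖v‖ := by
  refine ⟨2 * c ^ 2 * ‖gammaLin‖ * ‖gammaLinConj‖ + 1, by positivity, fun x v hx => ?_⟩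
  refine (norm_instantonPotentialA2_le c (norm_pos_iff.1 (one_pos.trans_le hx)) v).trans ?_
  gcongr
  exact le_add_of_nonneg_right zero_le_one
end
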